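/- arXiv:0707.3959 — 4 statements merged into one kernel-verified Lean document; each statement's English description precedes it below -/
import Mathlib

section
/- A linear space-time block code X = Σ_{l=1}^{L} c_l C_l with real symbols c_l and complex dispersion matrices C_l is Γ-group decodable (i.e., the ML decoding metric ‖Y − XH‖_F² decouples into a sum of Γ independent submetrics, each involving only the symbols of one group) if and only if C_p† C_q + C_q† C_p = 0 for all indices p, q belonging to different groups. -/
/-!
Writing `D l = C l * H`, the ML metric is the quadratic function
`c ↦ ‖Y‖² - 2 ∑ c_l Re⟪Y, D_l⟫ + ∑_{p,q} c_p c_q Re⟪D_p, D_q⟫` of the real symbols. A quadratic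
function splits into per-group terms iff its cross coefficients `β p q + β q p` vanish between
groups; necessity comes from `φ(e_p + e_q) + φ(0) = φ(e_p) + φ(e_q)`. Here the cross coefficient is
`Re tr(Hᴴ A H)` with the Hermitian matrix `A = C_pᴴ C_q + C_qᴴ C_p`, and this vanishes for all `H`
only if `A = 0`: the choices `H = 1 ± A` give `4 Re tr(Aᴴ A) = 0`.
-/

open Matrix Finset

def IsGroupSeparable {ι κ : Type*} [Fintype κ] (g : ι → κ) (φ : (ι → ℝ) → ℝ) : Prop :=
  ∃ (a : ℝ) (f : κ → (ι → ℝ) → ℝ),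
    (∀ i (c c' : ι → ℝ), (∀ l, g l = i → c l = c' l) → f i c = f i c') ∧
    ∀ c, φ c = a + ∑ i, f i c

theorem IsGroupSeparable.apply_add_add_apply_zero {ι κ : Type*} [Fintype κ] {g : ι → κ}
    {φ : (ι → ℝ) → ℝ} (hφ : IsGroupSeparable g φ) {x y : ι → ℝ}
    (hxy : Disjoint (g '' Function.support x) (g '' Function.support y)) :
    φ (x + y) + φ 0 = φ x + φ y := by
  obtain ⟨a, f, hf, hφ⟩ := hφ
  have fiber : ∀ i, f i (x + y) + f i 0 = f i x + f i y := by
    intro i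
    by_cases hi : i ∈ g '' Function.support y
    · have hx : ∀ l, g l = i → x l = 0 := fun l hl => by
        by_contra h
        exact Set.disjoint_left.1 hxy ⟨l, h, hl⟩ hi
      rw [hf i (x + y) y fun l hl => by simp [hx l hl], hf i x 0 fun l hl => by simp [hx l hl]]
      ring
    · have hy : ∀ l, g l = i → y l = 0 := fun l hl => by
        by_contra h
        exact hi ⟨l, h, hl⟩
      rw [hf i (x + y) x fun l hl => by simp [hy l hl], hf i y 0 fun l hl => by simp [hy l hl]]
  have total : ∑ i, (f i (x + y) + f i 0) = ∑ i, (f i x + f i y) :=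
    sum_congr rfl fun i _ => fiber i
  simp only [sum_add_distrib] at total
  simp only [hφ]
  linarith

theorem Matrix.dotProduct_mulVec_self_eq_zero_of_add_transpose_eq_zero {ι : Type*} [Fintype ι]
    {β : Matrix ι ι ℝ} (hβ : β + βᵀ = 0) (c : ι → ℝ) : c ⬝ᵥ β *ᵥ c = 0 := by
  have htranspose : c ⬝ᵥ βᵀ *ᵥ c = c ⬝ᵥ β *ᵥ c := by
    rw [dotProduct_mulVec, vecMul_transpose, dotProduct_comm]
  have hsum : c ⬝ᵥ (β + βᵀ) *ᵥ c = 0 := by simp [hβ]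
  rw [add_mulVec, dotProduct_add, htranspose] at hsum
  linarith

theorem isGroupSeparable_quadratic_iff {ι κ : Type*} [Fintype ι] [Fintype κ]
    (g : ι → κ) (a : ℝ) (b : ι → ℝ) (β : Matrix ι ι ℝ) :
    IsGroupSeparable g (fun c => a + b ⬝ᵥ c + c ⬝ᵥ β *ᵥ c) ↔
      ∀ p q, g p ≠ g q → β p q + β q p = 0 := by
  classical
  constructor
  · intro hφ p q hpq
    have := hφ.apply_add_add_apply_zero (x := Pi.single p 1) (y := Pi.single q 1)
      (by simpa [Pi.support_single_of_ne one_ne_zero] using hpq)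
    simp only [add_dotProduct, dotProduct_add, mulVec_add, single_one_dotProduct,
      mulVec_single_one, col_apply, dotProduct_zero, zero_dotProduct] at this
    linarith
  · intro hβ
    -- `β - β'` is antisymmetric, hence invisible to the quadratic form
    set β' : Matrix ι ι ℝ := of fun p q => if g p = g q then β p q else 0
    have hquad : ∀ c, c ⬝ᵥ β *ᵥ c = c ⬝ᵥ β' *ᵥ c := by
      have hoff : β - β' + (β - β')ᵀ = 0 := by
        ext p q
        by_cases hpq : g p = g q
        · simp [β', hpq]
        · simp [β', hpq, Ne.symm hpq, hβ p q hpq]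
      intro c
      have := dotProduct_mulVec_self_eq_zero_of_add_transpose_eq_zero hoff c
      rwa [sub_mulVec, dotProduct_sub, sub_eq_zero] at this
    refine ⟨a, fun i c => ∑ p with g p = i, c p * (b + β' *ᵥ c) p, ?_, fun c => ?_⟩
    · intro i c c' hcc
      refine sum_congr rfl fun p hp => ?_
      have hp : g p = i := (mem_filter.1 hp).2
      have hrow : (β' *ᵥ c) p = (β' *ᵥ c') p := sum_congr rfl fun q _ => by
        by_cases hq : g p = g q
        · rw [hcc q (hq ▸ hp)]
        · simp [β', hq]
      simp only [Pi.add_apply, hrow, hcc p hp]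
    · dsimp only
      rw [sum_fiberwise univ g fun p => c p * (b + β' *ᵥ c) p, hquad, add_assoc,
        dotProduct_comm b, ← dotProduct_add]
      rfl

theorem LinearMap.BilinForm.apply_sub_sum_smul_self {V ι : Type*} [AddCommGroup V] [Module ℝ V]
    [Fintype ι] (B : LinearMap.BilinForm ℝ V) (y : V) (d : ι → V) (c : ι → ℝ) :
    B (y - ∑ l, c l • d l) (y - ∑ l, c l • d l) =
      B y y + (-fun l => B y (d l) + B (d l) y) ⬝ᵥ c +
        c ⬝ᵥ (of fun p q => B (d p) (d q)) *ᵥ c := by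
  simp only [map_sub, map_sum, map_smul, LinearMap.sub_apply, LinearMap.sum_apply,
    LinearMap.smul_apply, smul_eq_mul, dotProduct, mulVec, of_apply, Pi.neg_apply, mul_sum,
    sum_add_distrib, add_mul, neg_mul, sum_neg_distrib, mul_sub, sum_sub_distrib]
  rw [sum_comm (f := fun q p => c q * (c p * B (d p) (d q)))]
  simp only [mul_comm, mul_left_comm]
  ring

theorem isGroupSeparable_bilinForm_iff {V ι κ : Type*} [AddCommGroup V] [Module ℝ V]
    [Fintype ι] [Fintype κ] (g : ι → κ) (B : LinearMap.BilinForm ℝ V) (y : V) (d : ι → V) :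
    IsGroupSeparable g (fun c => B (y - ∑ l, c l • d l) (y - ∑ l, c l • d l)) ↔
      ∀ p q, g p ≠ g q → B (d p) (d q) + B (d q) (d p) = 0 := by
  simp only [LinearMap.BilinForm.apply_sub_sum_smul_self]
  exact isGroupSeparable_quadratic_iff g _ _ _

noncomputable def Matrix.reFrobeniusForm (m n : Type*) [Fintype m] [Fintype n] :
    LinearMap.BilinForm ℝ (Matrix m n ℂ) :=
  LinearMap.mk₂ ℝ (fun A B => (Aᴴ * B).trace.re)
    (fun A₁ A₂ B => by simp [Matrix.add_mul, trace_add])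
    (fun r A B => by simp [Matrix.smul_mul, trace_smul])
    (fun A B₁ B₂ => by simp [Matrix.mul_add, trace_add])
    (fun r A B => by simp [Matrix.mul_smul, trace_smul])

theorem Matrix.reFrobeniusForm_mul_add_mul {m k n : Type*} [Fintype m] [Fintype k] [Fintype n]
    (P Q : Matrix m k ℂ) (H : Matrix k n ℂ) :
    reFrobeniusForm m n (P * H) (Q * H) + reFrobeniusForm m n (Q * H) (P * H) =
      (Hᴴ * (Pᴴ * Q + Qᴴ * P) * H).trace.re := by
  simp [reFrobeniusForm, conjTranspose_mul, Matrix.mul_add, Matrix.add_mul, Matrix.mul_assoc,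
    trace_add]

open ComplexOrder in
theorem Matrix.IsHermitian.re_trace_conjTranspose_mul_mul_self_eq_zero_iff {n : Type*}
    [Fintype n] {A : Matrix n n ℂ} (hA : A.IsHermitian) :
    (∀ H : Matrix n n ℂ, (Hᴴ * A * H).trace.re = 0) ↔ A = 0 := by
  classical
  refine ⟨fun h => ?_, fun h H => by simp [h]⟩
  have polar : 4 • (Aᴴ * A) = (1 + A)ᴴ * A * (1 + A) - (1 - A)ᴴ * A * (1 - A) := by
    rw [conjTranspose_add, conjTranspose_sub, conjTranspose_one, hA.eq]
    noncomm_ring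
  have hre : (Aᴴ * A).trace.re = 0 := by
    have := congrArg (fun X => X.trace.re) polar
    simp only [trace_smul, trace_sub, Complex.sub_re, h, sub_zero] at this
    simpa using this
  have him : (Aᴴ * A).trace.im = 0 :=
    ((Complex.nonneg_iff.1 (posSemidef_conjTranspose_mul_self A).trace_nonneg).2).symm
  exact trace_conjTranspose_mul_self_eq_zero_iff.1 (Complex.ext hre him)

/-- A linear STBC `X c = ∑ l, c l • C l` is Γ-group decodable
(for every received matrix `Y` and channel `H`, the ML metric
`‖Y − X c * H‖_F² = tr((Y − X c * H)ᴴ (Y − X c * H))` decouples into a constant plus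
Γ submetrics, each depending only on the symbols of one group) iff
`(C p)ᴴ * C q + (C q)ᴴ * C p = 0` whenever `p` and `q` are in different groups. -/
theorem stbc_group_decodable_iff
    (T M L Γ : ℕ) (C : Fin L → Matrix (Fin T) (Fin M) ℂ)
    (g : Fin L → Fin Γ) :
    (∀ (N : ℕ) (Y : Matrix (Fin T) (Fin N) ℂ) (H : Matrix (Fin M) (Fin N) ℂ),
      ∃ (κ : ℝ) (f : Fin Γ → (Fin L → ℝ) → ℝ),
        (∀ i (c c' : Fin L → ℝ), (∀ l, g l = i → c l = c' l) → f i c = f i c') ∧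
        (∀ c : Fin L → ℝ,
          (Matrix.trace ((Y - (∑ l, c l • C l) * H)ᴴ * (Y - (∑ l, c l • C l) * H))).re
            = κ + ∑ i, f i c))
    ↔ (∀ p q, g p ≠ g q → (C p)ᴴ * C q + (C q)ᴴ * C p = 0) := by
  have metric_eq : ∀ N (Y : Matrix (Fin T) (Fin N) ℂ) (H : Matrix (Fin M) (Fin N) ℂ)
      (c : Fin L → ℝ),
      (trace ((Y - (∑ l, c l • C l) * H)ᴴ * (Y - (∑ l, c l • C l) * H))).re =
        reFrobeniusForm _ _ (Y - ∑ l, c l • (C l * H)) (Y - ∑ l, c l • (C l * H)) := by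
    intro N Y H c
    simp only [Matrix.sum_mul, Matrix.smul_mul]
    rfl
  have hermitian : ∀ p q, ((C p)ᴴ * C q + (C q)ᴴ * C p).IsHermitian := fun p q => by
    simpa [conjTranspose_mul] using isHermitian_add_transpose_self ((C p)ᴴ * C q)
  show (∀ N Y H, IsGroupSeparable g fun c => _) ↔ _
  simp only [metric_eq, isGroupSeparable_bilinForm_iff, reFrobeniusForm_mul_add_mul]
  constructor
  · intro h p q hpq
    exact (hermitian p q).re_trace_conjTranspose_mul_mul_self_eq_zero_iff.1
      fun H => h M 0 H p q hpq
  · intro h N Y H p q hpq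
    simp [h p q hpq]
end

section
/- Suppose the dispersion matrix pairs (A_k, B_k), 1 ≤ k ≤ K, of a T×M linear STBC satisfy the Γ-group decodability conditions A_p†A_q + A_q†A_p = 0, B_p†B_q + B_q†B_p = 0, and A_p†B_q + B_q†A_p = 0 for all p, q in different groups. Define 2T×2M matrices Ā_{2k-1} = diag(A_k, A_k), Ā_{2k} = diag(B_k, B_k), B̄_{2k-1} = antidiag(A_k, A_k), B̄_{2k} = antidiag(B_k, B_k) (block diagonal and block anti-diagonal 2×2 block matrices). Then the pairs (Ā_i, B̄_i), 1 ≤ i ≤ 2K, satisfy the same three anti-commutation conditions whenever 2p−1, 2p and 2q−1, 2q are assigned to different groups inherited from p and q. -/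
open Matrix

namespace Matrix

variable {m n α : Type*} [Fintype m] [NonUnitalNonAssocSemiring α] [StarRing α]

/-- The anti-commutator `Xᴴ Y + Yᴴ X` whose vanishing across groups is Γ-group decodability. -/
def starAnticomm (X Y : Matrix m n α) : Matrix n n α := Xᴴ * Y + Yᴴ * X

theorem starAnticomm_comm (X Y : Matrix m n α) : starAnticomm X Y = starAnticomm Y X :=
  add_comm _ _

theorem starAnticomm_fromBlocks_diag (X Y : Matrix m n α) :
    starAnticomm (fromBlocks X 0 0 X) (fromBlocks Y 0 0 Y) =
      fromBlocks (starAnticomm X Y) 0 0 (starAnticomm X Y) := by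
  simp [starAnticomm, fromBlocks_conjTranspose, fromBlocks_multiply, fromBlocks_add]

theorem starAnticomm_fromBlocks_antidiag (X Y : Matrix m n α) :
    starAnticomm (fromBlocks 0 X X 0) (fromBlocks 0 Y Y 0) =
      fromBlocks (starAnticomm X Y) 0 0 (starAnticomm X Y) := by
  simp [starAnticomm, fromBlocks_conjTranspose, fromBlocks_multiply, fromBlocks_add]

theorem starAnticomm_fromBlocks_diag_antidiag (X Y : Matrix m n α) :
    starAnticomm (fromBlocks X 0 0 X) (fromBlocks 0 Y Y 0) =
      fromBlocks 0 (starAnticomm X Y) (starAnticomm X Y) 0 := by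
  simp [starAnticomm, fromBlocks_conjTranspose, fromBlocks_multiply, fromBlocks_add]

end Matrix

/-- If the dispersion pairs `(A k, B k)` satisfy the Γ-group decodability
anti-commutation conditions for indices in different groups, then the doubled-size
dispersion pairs `(Ā, B̄)` built by the block-diagonal / block-anti-diagonal mapping
(index `(k, false) ↔ 2k−1`, `(k, true) ↔ 2k`, inheriting the group of `k`)
satisfy the same three conditions. -/
theorem fourGp_recursive_construction
    (T M K Γ : ℕ) (A B : Fin K → Matrix (Fin T) (Fin M) ℂ) (g : Fin K → Fin Γ)
    (hA : ∀ p q, g p ≠ g q → (A p)ᴴ * A q + (A q)ᴴ * A p = 0)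
    (hB : ∀ p q, g p ≠ g q → (B p)ᴴ * B q + (B q)ᴴ * B p = 0)
    (hAB : ∀ p q, g p ≠ g q → (A p)ᴴ * B q + (B q)ᴴ * A p = 0)
    (Abar Bbar : Fin K × Bool → Matrix (Fin T ⊕ Fin T) (Fin M ⊕ Fin M) ℂ)
    (hAbar : ∀ k, Abar (k, false) = Matrix.fromBlocks (A k) 0 0 (A k) ∧
                  Abar (k, true)  = Matrix.fromBlocks (B k) 0 0 (B k))
    (hBbar : ∀ k, Bbar (k, false) = Matrix.fromBlocks 0 (A k) (A k) 0 ∧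
                  Bbar (k, true)  = Matrix.fromBlocks 0 (B k) (B k) 0) :
    ∀ p q : Fin K × Bool, g p.1 ≠ g q.1 →
      (Abar p)ᴴ * Abar q + (Abar q)ᴴ * Abar p = 0 ∧
      (Bbar p)ᴴ * Bbar q + (Bbar q)ᴴ * Bbar p = 0 ∧
      (Abar p)ᴴ * Bbar q + (Bbar q)ᴴ * Abar p = 0 := by
  let C : Fin K × Bool → Matrix (Fin T) (Fin M) ℂ := fun k => bif k.2 then B k.1 else A k.1
  have hC : ∀ p q : Fin K × Bool, g p.1 ≠ g q.1 → starAnticomm (C p) (C q) = 0 := by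
    rintro ⟨p, _ | _⟩ ⟨q, _ | _⟩ h
    · exact hA p q h
    · exact hAB p q h
    · rw [starAnticomm_comm]; exact hAB q p h.symm
    · exact hB p q h
  have hAbarC : ∀ k, Abar k = fromBlocks (C k) 0 0 (C k) := by
    rintro ⟨k, _ | _⟩
    exacts [(hAbar k).1, (hAbar k).2]
  have hBbarC : ∀ k, Bbar k = fromBlocks 0 (C k) (C k) 0 := by
    rintro ⟨k, _ | _⟩
    exacts [(hBbar k).1, (hBbar k).2]
  intro p q h
  change starAnticomm (Abar p) (Abar q) = 0 ∧ starAnticomm (Bbar p) (Bbar q) = 0 ∧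
    starAnticomm (Abar p) (Bbar q) = 0
  simp only [hAbarC, hBbarC, starAnticomm_fromBlocks_diag, starAnticomm_fromBlocks_antidiag,
    starAnticomm_fromBlocks_diag_antidiag, hC p q h, fromBlocks_zero, and_self]
end

section
/- (Craig's formula) For x > 0, Q(x) = (1/π) ∫₀^{π/2} exp(−x²/(2 sin² α)) dα, where Q is the Gaussian tail function Q(x) = (1/√(2π)) ∫_x^∞ e^{−t²/2} dt. -/
/-!
Integrate the standard Gaussian density of the plane over the half-plane `{q | x < q.2}` in two
ways. In Cartesian coordinates the integral factors as `√(2π) ∫_x^∞ e^{-t²/2} dt`. In polar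
coordinates, the ray of angle `θ ∈ (0, π)` meets the half-plane from radius `x / sin θ` on, and
`∫_{x / sin θ}^∞ r e^{-r²/2} dr = exp (-x² / (2 sin² θ))`; rays with `sin θ ≤ 0` miss it. The
reflection `θ ↦ π - θ` folds `(0, π)` onto `(0, π/2)`.
-/

open Real MeasureTheory intervalIntegral

open Set Filter Topology

theorem integral_Ioi_mul_exp_neg_sq_div_two (c : ℝ) :
    ∫ r in Ioi c, r * exp (-r ^ 2 / 2) = exp (-c ^ 2 / 2) := by
  have hderiv (r : ℝ) : HasDerivAt (fun r ↦ -exp (-r ^ 2 / 2)) (r * exp (-r ^ 2 / 2)) r := by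
    refine (((hasDerivAt_pow 2 r).neg.div_const 2).exp).neg.congr_deriv ?_
    norm_num
    ring
  have hint : IntegrableOn (fun r ↦ r * exp (-r ^ 2 / 2)) (Ioi c) := by
    refine (integrable_mul_exp_neg_mul_sq one_half_pos).integrableOn.congr_fun (fun r _ ↦ ?_)
      measurableSet_Ioi
    dsimp only
    congr 2
    ring
  have hlim : Tendsto (fun r : ℝ ↦ -exp (-r ^ 2 / 2)) atTop (𝓝 0) := by
    simpa using ((tendsto_exp_atBot.comp
      ((tendsto_neg_atTop_atBot.comp (tendsto_pow_atTop two_ne_zero)).atBot_div_const two_pos)).neg)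
  rw [integral_Ioi_of_hasDerivAt_of_tendsto' (fun r _ ↦ hderiv r) hint hlim]
  ring

theorem setIntegral_Ioi_zero_indicator_lt_mul {x : ℝ} (hx : 0 ≤ x) (c : ℝ) :
    ∫ r in Ioi 0, {r | x < r * c}.indicator (fun r ↦ r * exp (-r ^ 2 / 2)) r =
      if 0 < c then exp (-x ^ 2 / (2 * c ^ 2)) else 0 := by
  have hmeas : MeasurableSet {r : ℝ | x < r * c} := measurableSet_lt measurable_const (by fun_prop)
  rw [setIntegral_indicator hmeas]
  split_ifs with hc
  · have hset : Ioi 0 ∩ {r | x < r * c} = Ioi (x / c) := by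
      ext r
      simp only [mem_inter_iff, mem_Ioi, mem_ofPred_eq, div_lt_iff₀ hc]
      exact ⟨fun h ↦ h.2, fun h ↦ ⟨pos_of_mul_pos_left (hx.trans_lt h) hc.le, h⟩⟩
    rw [hset, integral_Ioi_mul_exp_neg_sq_div_two]
    congr 1
    field_simp
  · have hset : Ioi 0 ∩ {r | x < r * c} = ∅ := by
      ext r
      simp only [mem_inter_iff, mem_Ioi, mem_ofPred_eq, mem_empty_iff_false, iff_false, not_and,
        not_lt]
      intro hr
      nlinarith
    rw [hset, Measure.restrict_empty, integral_zero_measure]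

theorem intervalIntegrable_exp_neg_div_sin_sq (c a b : ℝ) (hc : 0 ≤ c) :
    IntervalIntegrable (fun θ ↦ exp (-c / (2 * sin θ ^ 2))) volume a b := by
  refine (intervalIntegrable_const (c := (1 : ℝ))).mono_fun
    (by fun_prop : Measurable _).aestronglyMeasurable (ae_of_all _ fun θ ↦ ?_)
  dsimp only
  rw [norm_of_nonneg (exp_pos _).le, norm_one, exp_le_one_iff]
  exact div_nonpos_of_nonpos_of_nonneg (neg_nonpos.mpr hc) (by positivity)

section

variable {E : Type*} [NormedAddCommGroup E] [NormedSpace ℝ E]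

theorem integral_comp_sin_zero_pi_eq_two_smul (g : ℝ → E)
    (hg : IntervalIntegrable (fun θ ↦ g (sin θ)) volume 0 π) :
    ∫ θ in 0..π, g (sin θ) = (2 : ℝ) • ∫ θ in 0..π / 2, g (sin θ) := by
  have hmid : π / 2 ∈ uIcc 0 π := mem_uIcc_of_le (by positivity) (half_le_self pi_pos.le)
  have hleft := hg.mono_set (uIcc_subset_uIcc_left hmid)
  have hright := hg.mono_set (uIcc_subset_uIcc_right hmid)
  have hreflect : ∫ θ in π / 2..π, g (sin θ) = ∫ θ in 0..π / 2, g (sin θ) := by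
    have := integral_comp_sub_left (fun θ ↦ g (sin θ)) π (a := 0) (b := π / 2)
    simp only [sin_pi_sub, sub_zero] at this
    rw [this, sub_half]
  rw [← integral_add_adjacent_intervals hleft hright, hreflect, two_smul]

theorem integrableOn_comp_polarCoord_symm {f : ℝ × ℝ → E} (hf : Integrable f) :
    IntegrableOn (fun p ↦ p.1 • f (polarCoord.symm p)) polarCoord.target := by
  have hchange := integrableOn_image_iff_integrableOn_abs_det_fderiv_smul volume
    polarCoord.open_target.measurableSet
    (fun p _ ↦ (hasFDerivAt_polarCoord_symm p).hasFDerivWithinAt) polarCoord.symm.injOn f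
  simp only [polarCoord.symm_image_target_eq_source, det_fderivPolarCoordSymm] at hchange
  refine (hchange.mp hf.integrableOn).congr_fun (fun p hp ↦ ?_)
    polarCoord.open_target.measurableSet
  simp only [abs_of_pos (a := p.1) hp.1]

end

theorem integrable_exp_neg_sq_add_sq_div_two :
    Integrable (fun q : ℝ × ℝ ↦ exp (-(q.1 ^ 2 + q.2 ^ 2) / 2)) := by
  refine ((integrable_exp_neg_mul_sq one_half_pos).mul_prod
    (integrable_exp_neg_mul_sq one_half_pos)).congr (ae_of_all _ fun q ↦ ?_)
  dsimp only
  rw [← exp_add]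
  ring_nf

theorem setIntegral_lt_snd_gaussian_eq_tail_mul_sqrt (x : ℝ) :
    ∫ q in {q : ℝ × ℝ | x < q.2}, exp (-(q.1 ^ 2 + q.2 ^ 2) / 2) =
      (∫ t in Ioi x, exp (-t ^ 2 / 2)) * √(2 * π) := by
  have hset : {q : ℝ × ℝ | x < q.2} = univ ×ˢ Ioi x := by ext; simp
  have hsplit (q : ℝ × ℝ) :
      exp (-(q.1 ^ 2 + q.2 ^ 2) / 2) = exp (-(1 / 2) * q.1 ^ 2) * exp (-q.2 ^ 2 / 2) := by
    rw [← exp_add]; ring_nf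
  simp_rw [hset, hsplit]
  rw [Measure.volume_eq_prod,
    setIntegral_prod_mul (fun a ↦ exp (-(1 / 2) * a ^ 2)) (fun b ↦ exp (-b ^ 2 / 2)),
    Measure.restrict_univ, integral_gaussian, mul_comm]
  congr 2
  field_simp

theorem setIntegral_lt_snd_gaussian_eq_integral_sin {x : ℝ} (hx : 0 ≤ x) :
    ∫ q in {q : ℝ × ℝ | x < q.2}, exp (-(q.1 ^ 2 + q.2 ^ 2) / 2) =
      ∫ θ in 0..π, exp (-x ^ 2 / (2 * sin θ ^ 2)) := by
  have hmeas : MeasurableSet {q : ℝ × ℝ | x < q.2} :=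
    measurableSet_lt measurable_const measurable_snd
  have hint := integrableOn_comp_polarCoord_symm
    (integrable_exp_neg_sq_add_sq_div_two.indicator hmeas)
  have hpolar (θ r : ℝ) : r • {q : ℝ × ℝ | x < q.2}.indicator
      (fun q ↦ exp (-(q.1 ^ 2 + q.2 ^ 2) / 2)) (polarCoord.symm (r, θ)) =
      {r | x < r * sin θ}.indicator (fun r ↦ r * exp (-r ^ 2 / 2)) r := by
    have hnorm : (r * cos θ) ^ 2 + (r * sin θ) ^ 2 = r ^ 2 := by
      linear_combination r ^ 2 * cos_sq_add_sin_sq θ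
    simp only [polarCoord_symm_apply, indicator_apply, mem_ofPred_eq, hnorm, smul_eq_mul,
      mul_ite, mul_zero]
  have hinner : ∀ θ ∈ Ioo (-π) π,
      ∫ r in Ioi 0, {r | x < r * sin θ}.indicator (fun r ↦ r * exp (-r ^ 2 / 2)) r =
        (Ioo 0 π).indicator (fun θ ↦ exp (-x ^ 2 / (2 * sin θ ^ 2))) θ := by
    intro θ hθ
    rw [setIntegral_Ioi_zero_indicator_lt_mul hx, indicator_apply]
    refine if_congr ⟨fun hsin ↦ ⟨?_, hθ.2⟩, fun hθ' ↦ sin_pos_of_mem_Ioo hθ'⟩ rfl rfl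
    by_contra! hneg
    linarith [sin_nonpos_of_nonpos_of_neg_pi_le hneg hθ.1.le]
  rw [← MeasureTheory.integral_indicator hmeas, ← integral_comp_polarCoord_symm,
    polarCoord_target, Measure.volume_eq_prod, ← setIntegral_prod_swap, setIntegral_prod]
  swap
  · exact hint.swap
  simp only [Prod.swap_prod_mk, hpolar]
  rw [setIntegral_congr_fun measurableSet_Ioo hinner, setIntegral_indicator measurableSet_Ioo,
    Ioo_inter_Ioo, max_eq_right (neg_nonpos.mpr pi_pos.le), min_self,
    ← integral_Ioc_eq_integral_Ioo, ← integral_of_le pi_pos.le]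

/-- Craig's formula: for `x > 0`, the Gaussian tail function
`Q(x) = (1/√(2π)) ∫_x^∞ e^{−t²/2} dt` equals
`(1/π) ∫₀^{π/2} exp(−x²/(2 sin² α)) dα`. -/
theorem craig_formula (x : ℝ) (hx : 0 < x) :
    (1 / Real.sqrt (2 * π)) * ∫ t in Set.Ioi x, Real.exp (-t ^ 2 / 2) =
      (1 / π) * ∫ α in (0 : ℝ)..(π / 2), Real.exp (-x ^ 2 / (2 * Real.sin α ^ 2)) := by
  have hplane := setIntegral_lt_snd_gaussian_eq_tail_mul_sqrt x
  rw [setIntegral_lt_snd_gaussian_eq_integral_sin hx.le,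
    integral_comp_sin_zero_pi_eq_two_smul (fun s ↦ exp (-x ^ 2 / (2 * s ^ 2)))
      (intervalIntegrable_exp_neg_div_sin_sq _ _ _ (sq_nonneg x)), smul_eq_mul] at hplane
  set tail := ∫ t in Ioi x, exp (-t ^ 2 / 2)
  set craig := ∫ α in (0 : ℝ)..(π / 2), exp (-x ^ 2 / (2 * sin α ^ 2))
  have hsqrt : √(2 * π) ^ 2 = 2 * π := sq_sqrt (by positivity)
  field_simp
  linear_combination -(√(2 * π) / 2) * hplane - (tail / 2) * hsqrt
end

section
/- Fix nonzero reals β₁,…,β₄. As ρ → ∞, the exact PEP P(ρ) = (1/π)∫₀^{π/2} Π_{i=1}^4 (1 + ρβ_i²/(8 sin²α))^{−2} dα satisfies P(ρ) · ρ^8 → (2^{24}/π) (∫₀^{π/2} sin^{16}α dα) Π_{i=1}^4 β_i^{−4}; in particular P(ρ) decays like ρ^{−8} (diversity order 8). -/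
/-!
Each factor satisfies `ρ² (1 + ρ a)⁻² = (ρ⁻¹ + a)⁻²`, which increases to `a⁻²` as `ρ → ∞` when
`a > 0`. So `ρ⁸` times the integrand converges pointwise and is dominated by its own limit
`∏ᵢ (8 sin²α / βᵢ²)² = 2²⁴ sin¹⁶α ∏ᵢ βᵢ⁻⁴`, and dominated convergence gives the limit of the
integral.
-/

open Real Filter MeasureTheory Set Topology

theorem pow_mul_inv_one_add_mul_pow {K : Type*} [Field K] {ρ : K} (hρ : ρ ≠ 0) (a : K) (n : ℕ) :
    ρ ^ n * ((1 + ρ * a) ^ n)⁻¹ = ((ρ⁻¹ + a) ^ n)⁻¹ := by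
  have hfactor : ρ⁻¹ + a = ρ⁻¹ * (1 + ρ * a) := by rw [mul_add, inv_mul_cancel_left₀ hρ, mul_one]
  rw [hfactor, mul_pow, mul_inv, inv_pow, inv_inv]

theorem tendsto_pow_mul_inv_one_add_mul_pow {a : ℝ} (ha : a ≠ 0) (n : ℕ) :
    Tendsto (fun ρ : ℝ => ρ ^ n * ((1 + ρ * a) ^ n)⁻¹) atTop (𝓝 (a ^ n)⁻¹) := by
  have hlim : Tendsto (fun ρ : ℝ => ((ρ⁻¹ + a) ^ n)⁻¹) atTop (𝓝 (((0 : ℝ) + a) ^ n)⁻¹) :=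
    ((tendsto_inv_atTop_zero.add_const a).pow n).inv₀ (by simpa using pow_ne_zero n ha)
  rw [zero_add] at hlim
  refine hlim.congr' ?_
  filter_upwards [eventually_ne_atTop 0] with ρ hρ
  exact (pow_mul_inv_one_add_mul_pow hρ a n).symm

theorem pow_mul_inv_one_add_mul_pow_le {ρ a : ℝ} (hρ : 0 < ρ) (ha : 0 < a) (n : ℕ) :
    ρ ^ n * ((1 + ρ * a) ^ n)⁻¹ ≤ (a ^ n)⁻¹ := by
  rw [pow_mul_inv_one_add_mul_pow hρ.ne' a n]
  gcongr
  exact le_add_of_nonneg_left (inv_nonneg.mpr hρ.le)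

theorem tendsto_integral_pow_mul_prod_inv_one_add_mul_pow {ι X : Type*} [Fintype ι]
    [MeasurableSpace X] {μ : Measure X} {a : ι → X → ℝ} (n : ℕ)
    (ha_meas : ∀ i, AEMeasurable (a i) μ) (ha_pos : ∀ᵐ x ∂μ, ∀ i, 0 < a i x)
    (hint : Integrable (fun x => ∏ i, (a i x ^ n)⁻¹) μ) :
    Tendsto (fun ρ : ℝ => ∫ x, ρ ^ (n * Fintype.card ι) * ∏ i, ((1 + ρ * a i x) ^ n)⁻¹ ∂μ)
      atTop (𝓝 (∫ x, ∏ i, (a i x ^ n)⁻¹ ∂μ)) := by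
  have hsplit : ∀ ρ x, ρ ^ (n * Fintype.card ι) * ∏ i, ((1 + ρ * a i x) ^ n)⁻¹ =
      ∏ i, ρ ^ n * ((1 + ρ * a i x) ^ n)⁻¹ := fun ρ x => by
    rw [pow_mul, Finset.prod_mul_distrib, Finset.prod_const, Finset.card_univ]
  simp only [hsplit]
  refine tendsto_integral_filter_of_dominated_convergence _ (Eventually.of_forall fun ρ => ?_)
    ?_ hint ?_
  · exact AEMeasurable.aestronglyMeasurable (by have := ha_meas; fun_prop)
  · filter_upwards [eventually_gt_atTop 0] with ρ hρ
    filter_upwards [ha_pos] with x hx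
    rw [Real.norm_of_nonneg (Finset.prod_nonneg fun i _ => by have := hx i; positivity)]
    exact Finset.prod_le_prod (fun i _ => by have := hx i; positivity)
      fun i _ => pow_mul_inv_one_add_mul_pow_le hρ (hx i) n
  · filter_upwards [ha_pos] with x hx
    exact tendsto_finsetProd _ fun i _ => tendsto_pow_mul_inv_one_add_mul_pow (hx i).ne' n

/-- for nonzero reals `β₁,…,β₄`, the exact PEP
`P(ρ) = (1/π)∫₀^{π/2} Π_{i=1}^4 (1 + ρβ_i²/(8 sin²α))^{−2} dα` satisfies
`ρ⁸ P(ρ) → (2²⁴/π)(∫₀^{π/2} sin¹⁶α dα) Π_i β_i^{−4}` as `ρ → ∞`;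
in particular `P(ρ)` decays like `ρ^{−8}` (diversity order 8). -/
theorem pep_high_snr_asymptotics (β : Fin 4 → ℝ) (hβ : ∀ i, β i ≠ 0) :
    Tendsto
      (fun ρ : ℝ => ρ ^ 8 * ((1 / π) * ∫ α in (0 : ℝ)..(π / 2),
        ∏ i : Fin 4, ((1 + ρ * β i ^ 2 / (8 * Real.sin α ^ 2)) ^ 2)⁻¹))
      atTop
      (nhds ((2 ^ 24 / π) * (∫ α in (0 : ℝ)..(π / 2), Real.sin α ^ 16) *
        ∏ i : Fin 4, (β i ^ 4)⁻¹)) := by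
  have hlimit : ∀ α, ∏ i : Fin 4, ((β i ^ 2 / (8 * sin α ^ 2)) ^ 2)⁻¹ =
      2 ^ 24 * (∏ i : Fin 4, (β i ^ 4)⁻¹) * sin α ^ 16 := fun α => by
    simp only [← inv_pow, inv_div, Fin.prod_univ_four]
    ring
  have hsin_pos : ∀ α ∈ Ioc 0 (π / 2), 0 < sin α := fun α hα =>
    sin_pos_of_pos_of_lt_pi hα.1 (hα.2.trans_lt (by linarith [pi_pos]))
  have hconv := tendsto_integral_pow_mul_prod_inv_one_add_mul_pow
    (μ := volume.restrict (Ioc 0 (π / 2))) (a := fun i α => β i ^ 2 / (8 * sin α ^ 2)) 2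
    (fun i => by fun_prop)
    ((ae_restrict_iff' measurableSet_Ioc).mpr (ae_of_all _ fun α hα i => by
      have := hsin_pos α hα; have := hβ i; positivity))
    (by simp only [hlimit]; exact (by fun_prop : Continuous _).integrableOn_Ioc)
  simp only [hlimit, integral_const_mul, Fintype.card_fin] at hconv
  rw [← intervalIntegral.integral_of_le (by positivity)] at hconv
  convert hconv.const_mul (1 / π) using 1
  · funext ρ
    rw [intervalIntegral.integral_of_le (by positivity)]
    simp only [mul_div_assoc]
    rw [mul_left_comm]
  · congr 1
    ring
end
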